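/- arXiv:1907.06246 — 4 statements merged into one kernel-verified Lean document; each statement's English description precedes it below -/
import Mathlib

section
/- For any x ∈ R^d, matrices K, K' ∈ R^{k×d}, symmetric positive definite R + B^T P_K B, and E_K = (R + B^T P_K B)K − B^T P_K A, the quadratic A_{K,K'}(x) = 2 x^T (K'−K)^T E_K x + x^T (K'−K)^T (R + B^T P_K B)(K'−K) x satisfies A_{K,K'}(x) ≥ − tr(x x^T E_K^T (R + B^T P_K B)^{-1} E_K), with equality when K' = K − (R + B^T P_K B)^{-1} E_K. -/
/-!
With `u = (K' - K) x`, `e = E_K x` and `W = R + Bᵀ P_K B`, the quadratic is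
`u ⬝ W u + 2 u ⬝ e = (u + W⁻¹ e) ⬝ W (u + W⁻¹ e) - e ⬝ W⁻¹ e`, and `e ⬝ W⁻¹ e` is the trace term.
Positivity of `W` gives the bound; at `K' = K - W⁻¹ E_K` the residual `u + W⁻¹ e` vanishes.
-/

open Matrix

namespace Matrix

variable {l m n α : Type*} [Fintype m] [Fintype n]

theorem trace_vecMulVec_mul [CommSemiring α] (x y : n → α) (M : Matrix n n α) :
    (vecMulVec x y * M).trace = y ⬝ᵥ M *ᵥ x := by
  rw [vecMulVec_mul, trace_vecMulVec, dotProduct_comm, ← dotProduct_mulVec]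

theorem dotProduct_transpose_mul_mulVec [CommSemiring α] [Fintype l] (M : Matrix m n α)
    (N : Matrix m l α) (x : n → α) (y : l → α) :
    x ⬝ᵥ (Mᵀ * N) *ᵥ y = M *ᵥ x ⬝ᵥ N *ᵥ y := by
  rw [← mulVec_mulVec, dotProduct_mulVec, vecMul_transpose]

variable [CommRing α] [DecidableEq m] {W : Matrix m m α}

theorem add_nonsing_inv_mulVec_dotProduct_mulVec (hW : W.IsSymm) (hdet : IsUnit W.det)
    (u e : m → α) :
    (u + W⁻¹ *ᵥ e) ⬝ᵥ W *ᵥ (u + W⁻¹ *ᵥ e) = u ⬝ᵥ W *ᵥ u + 2 * (u ⬝ᵥ e) + e ⬝ᵥ W⁻¹ *ᵥ e := by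
  have hcancel : W *ᵥ W⁻¹ *ᵥ e = e := by
    rw [mulVec_mulVec, mul_nonsing_inv _ hdet, one_mulVec]
  have hsymm : W⁻¹ *ᵥ e ⬝ᵥ W *ᵥ u = e ⬝ᵥ u := by
    rw [dotProduct_mulVec, ← mulVec_transpose, hW.eq, hcancel]
  rw [mulVec_add, hcancel, dotProduct_add, add_dotProduct, add_dotProduct, hsymm,
    dotProduct_comm (W⁻¹ *ᵥ e) e, dotProduct_comm e u]
  ring

theorem two_mul_dotProduct_add_dotProduct_eq_sub_trace (hW : W.IsSymm) (hdet : IsUnit W.det)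
    (M E : Matrix m n α) (x : n → α) :
    2 * (x ⬝ᵥ (Mᵀ * E) *ᵥ x) + x ⬝ᵥ (Mᵀ * W * M) *ᵥ x =
      (M *ᵥ x + W⁻¹ *ᵥ E *ᵥ x) ⬝ᵥ W *ᵥ (M *ᵥ x + W⁻¹ *ᵥ E *ᵥ x) -
        (vecMulVec x x * Eᵀ * W⁻¹ * E).trace := by
  have hcross : x ⬝ᵥ (Mᵀ * E) *ᵥ x = M *ᵥ x ⬝ᵥ E *ᵥ x := dotProduct_transpose_mul_mulVec M E x x
  have hquad : x ⬝ᵥ (Mᵀ * W * M) *ᵥ x = M *ᵥ x ⬝ᵥ W *ᵥ M *ᵥ x := by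
    rw [Matrix.mul_assoc, dotProduct_transpose_mul_mulVec, ← mulVec_mulVec]
  have htrace : (vecMulVec x x * Eᵀ * W⁻¹ * E).trace = E *ᵥ x ⬝ᵥ W⁻¹ *ᵥ E *ᵥ x := by
    rw [Matrix.mul_assoc, Matrix.mul_assoc, trace_vecMulVec_mul, dotProduct_transpose_mul_mulVec,
      ← mulVec_mulVec]
  rw [hcross, hquad, htrace, add_nonsing_inv_mulVec_dotProduct_mulVec hW hdet]
  ring

end Matrix

theorem lqr_completion_of_squares_general
    (d k : ℕ) (B : Matrix (Fin d) (Fin k) ℝ)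
    (K K' : Matrix (Fin k) (Fin d) ℝ) (PK : Matrix (Fin d) (Fin d) ℝ)
    (R : Matrix (Fin k) (Fin k) ℝ)
    (hW : (R + Bᵀ * PK * B).PosDef)
    (EK : Matrix (Fin k) (Fin d) ℝ) :
    (∀ x : Fin d → ℝ,
        2 * (x ⬝ᵥ ((K' - K)ᵀ * EK) *ᵥ x) +
            x ⬝ᵥ ((K' - K)ᵀ * (R + Bᵀ * PK * B) * (K' - K)) *ᵥ x ≥
          -(Matrix.vecMulVec x x * EKᵀ * (R + Bᵀ * PK * B)⁻¹ * EK).trace) ∧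
    (K' = K - (R + Bᵀ * PK * B)⁻¹ * EK →
      ∀ x : Fin d → ℝ,
        2 * (x ⬝ᵥ ((K' - K)ᵀ * EK) *ᵥ x) +
            x ⬝ᵥ ((K' - K)ᵀ * (R + Bᵀ * PK * B) * (K' - K)) *ᵥ x =
          -(Matrix.vecMulVec x x * EKᵀ * (R + Bᵀ * PK * B)⁻¹ * EK).trace) := by
  set W := R + Bᵀ * PK * B
  have hsymm : W.IsSymm := isHermitian_iff_isSymm.mp hW.isHermitian
  have hdet : IsUnit W.det := hW.det_pos.ne'.isUnit
  refine ⟨fun x => ?_, fun hK' x => ?_⟩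
  · rw [two_mul_dotProduct_add_dotProduct_eq_sub_trace hsymm hdet]
    have hnonneg := hW.posSemidef.dotProduct_mulVec_nonneg ((K' - K) *ᵥ x + W⁻¹ *ᵥ EK *ᵥ x)
    rw [star_trivial] at hnonneg
    linarith
  · have hresidual : (K' - K) *ᵥ x + W⁻¹ *ᵥ EK *ᵥ x = 0 := by
      rw [hK', sub_sub_cancel_left, neg_mulVec, mulVec_mulVec, neg_add_cancel]
    rw [two_mul_dotProduct_add_dotProduct_eq_sub_trace hsymm hdet, hresidual, zero_dotProduct,
      zero_sub]

/-- completion of squares: with `W = R + Bᵀ P_K B ≻ 0` and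
`E_K = W K − Bᵀ P_K A`, the quadratic
`A_{K,K'}(x) = 2 xᵀ(K'−K)ᵀ E_K x + xᵀ(K'−K)ᵀ W (K'−K) x` satisfies
`A_{K,K'}(x) ≥ − tr(x xᵀ E_Kᵀ W⁻¹ E_K)`, with equality when `K' = K − W⁻¹ E_K`. -/
theorem lqr_completion_of_squares
    (d k : ℕ) (A : Matrix (Fin d) (Fin d) ℝ) (B : Matrix (Fin d) (Fin k) ℝ)
    (K K' : Matrix (Fin k) (Fin d) ℝ) (PK : Matrix (Fin d) (Fin d) ℝ)
    (R : Matrix (Fin k) (Fin k) ℝ)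
    (hW : (R + Bᵀ * PK * B).PosDef)
    (EK : Matrix (Fin k) (Fin d) ℝ)
    (hEK : EK = (R + Bᵀ * PK * B) * K - Bᵀ * PK * A) :
    (∀ x : Fin d → ℝ,
        2 * (x ⬝ᵥ ((K' - K)ᵀ * EK) *ᵥ x) +
            x ⬝ᵥ ((K' - K)ᵀ * (R + Bᵀ * PK * B) * (K' - K)) *ᵥ x ≥
          -(Matrix.vecMulVec x x * EKᵀ * (R + Bᵀ * PK * B)⁻¹ * EK).trace) ∧
    (K' = K - (R + Bᵀ * PK * B)⁻¹ * EK →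
      ∀ x : Fin d → ℝ,
        2 * (x ⬝ᵥ ((K' - K)ᵀ * EK) *ᵥ x) +
            x ⬝ᵥ ((K' - K)ᵀ * (R + Bᵀ * PK * B) * (K' - K)) *ᵥ x =
          -(Matrix.vecMulVec x x * EKᵀ * (R + Bᵀ * PK * B)⁻¹ * EK).trace) :=
  lqr_completion_of_squares_general d k B K K' PK R hW EK
end

section
/- Let A and B be real symmetric m×m matrices that are simultaneously diagonalizable with eigenvalues λ_1,…,λ_m and μ_1,…,μ_m respectively. Then the eigenvalues of the symmetric Kronecker product A ⊗_s B are exactly {(λ_i μ_j + λ_j μ_i)/2 : 1 ≤ i ≤ j ≤ m}. -/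
open Matrix

/-- The symmetric Kronecker product `A ⊗_s B`, as the linear operator
`S ↦ (A S Bᵀ + B S Aᵀ)/2` on matrices (the svec coordinates of this operator on
symmetric matrices give the usual symmetric Kronecker product matrix). -/
noncomputable def symKron {m : Type*} [Fintype m] [DecidableEq m]
    (A B : Matrix m m ℝ) : Matrix m m ℝ →ₗ[ℝ] Matrix m m ℝ where
  toFun S := (2⁻¹ : ℝ) • (A * S * Bᵀ + B * S * Aᵀ)
  map_add' x y := by
    simp only [Matrix.mul_add, Matrix.add_mul]
    module
  map_smul' c x := by
    simp only [Matrix.mul_smul, Matrix.smul_mul, RingHom.id_apply]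
    module

/-- if `A` and `B` are symmetric and simultaneously diagonalized by an
orthogonal `U` with eigenvalues `λ` and `μ`, then the eigenvalues of `A ⊗_s B` are
exactly `{(λ_i μ_j + λ_j μ_i)/2 : i ≤ j}`. -/
theorem symKron_spectrum
    (m : ℕ) (A B U : Matrix (Fin m) (Fin m) ℝ) (lam mu : Fin m → ℝ)
    (hU : U * Uᵀ = 1)
    (hA : A = U * Matrix.diagonal lam * Uᵀ) (hB : B = U * Matrix.diagonal mu * Uᵀ)
    (hAs : A.IsSymm) (hBs : B.IsSymm) :
    spectrum ℝ (symKron A B : Module.End ℝ (Matrix (Fin m) (Fin m) ℝ)) =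
      {c : ℝ | ∃ i j : Fin m, i ≤ j ∧ c = (lam i * mu j + lam j * mu i) / 2} := by

  have hU' : Uᵀ * U = 1 := mul_eq_one_comm.mp hU
  have hc2 : ∀ X Y : Matrix (Fin m) (Fin m) ℝ,
      (U * X * Uᵀ) * (U * Y * Uᵀ) = U * (X * Y) * Uᵀ := by
    intro X Y
    calc (U * X * Uᵀ) * (U * Y * Uᵀ) = U * (X * ((Uᵀ * U) * Y)) * Uᵀ := by
          noncomm_ring
      _ = U * (X * Y) * Uᵀ := by rw [hU', Matrix.one_mul]
  have hconj : ∀ X : Matrix (Fin m) (Fin m) ℝ, Uᵀ * (U * X * Uᵀ) * U = X := by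
    intro X
    calc Uᵀ * (U * X * Uᵀ) * U = (Uᵀ * U) * X * (Uᵀ * U) := by noncomm_ring
      _ = X := by rw [hU', Matrix.one_mul, Matrix.mul_one]
  have key : ∀ P : Matrix (Fin m) (Fin m) ℝ,
      symKron A B (U * P * Uᵀ)
        = U * ((2⁻¹ : ℝ) • (Matrix.diagonal lam * P * Matrix.diagonal mu
            + Matrix.diagonal mu * P * Matrix.diagonal lam)) * Uᵀ := by
    intro P
    have hAT : Aᵀ = A := hAs
    have hBT : Bᵀ = B := hBs
    show (2⁻¹ : ℝ) • (A * (U * P * Uᵀ) * Bᵀ + B * (U * P * Uᵀ) * Aᵀ) = _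
    rw [hAT, hBT]
    conv_lhs => rw [hA, hB]
    rw [hc2, hc2, hc2, hc2]
    simp only [Matrix.smul_mul, Matrix.mul_smul, Matrix.mul_add, Matrix.add_mul,
      Matrix.mul_assoc]
  ext c
  simp only [Set.mem_setOf_eq]
  rw [← Module.End.hasEigenvalue_iff_mem_spectrum]
  constructor
  · intro h
    obtain ⟨S, hS⟩ := h.exists_hasEigenvector
    have hfS : symKron A B S = c • S := Module.End.mem_eigenspace_iff.mp hS.1
    have hS0 : S ≠ 0 := hS.2
    set P := Uᵀ * S * U with hPdef
    have hSP : S = U * P * Uᵀ := by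
      rw [hPdef]
      calc S = (U * Uᵀ) * S * (U * Uᵀ) := by rw [hU, Matrix.one_mul, Matrix.mul_one]
        _ = U * (Uᵀ * S * U) * Uᵀ := by noncomm_ring
    have hP0 : P ≠ 0 := by
      intro h0
      apply hS0
      rw [hSP, h0, Matrix.mul_zero, Matrix.zero_mul]
    obtain ⟨i, j, hij⟩ : ∃ i j, P i j ≠ 0 := by
      by_contra hcon
      push_neg at hcon
      exact hP0 (by ext i j; simpa using hcon i j)
    have heq := key P
    rw [← hSP, hfS, hSP] at heq
    have heq' : U * (c • P) * Uᵀ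
        = U * ((2⁻¹ : ℝ) • (Matrix.diagonal lam * P * Matrix.diagonal mu
            + Matrix.diagonal mu * P * Matrix.diagonal lam)) * Uᵀ := by
      rw [← heq]
      simp only [Matrix.smul_mul, Matrix.mul_smul]
    have heq2 : c • P = (2⁻¹ : ℝ) • (Matrix.diagonal lam * P * Matrix.diagonal mu
        + Matrix.diagonal mu * P * Matrix.diagonal lam) := by
      have h1 := congrArg (fun M => Uᵀ * M * U) heq'
      simpa only [hconj] using h1
    have hentry := congrFun (congrFun heq2 i) j
    simp only [Matrix.smul_apply, Matrix.add_apply, Matrix.mul_diagonal,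
      Matrix.diagonal_mul, smul_eq_mul] at hentry
    have hcval : c = (lam i * mu j + lam j * mu i) / 2 := by
      have hz : (c - (lam i * mu j + lam j * mu i) / 2) * P i j = 0 := by
        linarith [hentry]
      rcases mul_eq_zero.mp hz with h' | h'
      · linarith
      · exact absurd h' hij
    rcases le_total i j with hle | hle
    · exact ⟨i, j, hle, hcval⟩
    · exact ⟨j, i, hle, by rw [hcval]; ring⟩
  · rintro ⟨i, j, hij, rfl⟩
    set E : Matrix (Fin m) (Fin m) ℝ := Matrix.single i j 1 with hE
    have hDE : Matrix.diagonal lam * E * Matrix.diagonal mu = (lam i * mu j) • E := by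
      ext a b
      simp only [hE, Matrix.mul_diagonal, Matrix.diagonal_mul, Matrix.smul_apply,
        Matrix.single, Matrix.of_apply, smul_eq_mul]
      split_ifs with h
      · obtain ⟨rfl, rfl⟩ := h; ring
      · ring
    have hDE' : Matrix.diagonal mu * E * Matrix.diagonal lam = (mu i * lam j) • E := by
      ext a b
      simp only [hE, Matrix.mul_diagonal, Matrix.diagonal_mul, Matrix.smul_apply,
        Matrix.single, Matrix.of_apply, smul_eq_mul]
      split_ifs with h
      · obtain ⟨rfl, rfl⟩ := h; ring
      · ring
    set x : Matrix (Fin m) (Fin m) ℝ := U * E * Uᵀ with hx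
    have hx0 : x ≠ 0 := by
      intro h0
      have hEc : E = (0 : Matrix (Fin m) (Fin m) ℝ) := by
        have := hconj E
        rw [← hx, h0, Matrix.mul_zero, Matrix.zero_mul] at this
        exact this.symm
      have : E i j = (1 : ℝ) := by simp [hE]
      rw [hEc] at this
      simp at this
    have hfx : symKron A B x = ((lam i * mu j + lam j * mu i) / 2) • x := by
      rw [hx, key E, hDE, hDE', ← add_smul, smul_smul,
        Matrix.mul_smul, Matrix.smul_mul]
      congr 1
      ring
    exact Module.End.hasEigenvalue_of_hasEigenvector
      ⟨Module.End.mem_eigenspace_iff.mpr hfx, hx0⟩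
end

section
/- One-step natural policy gradient contraction for LQR: let K be stabilizing, K' = K − γ E_K with E_K = (R + B^T P_K B)K − B^T P_K A, and suppose γ ‖R + B^T P_K B‖ ≤ 1. Then J(K') − J(K*) ≤ (1 − γ σ_min(Ψ) σ_min(R) ‖Σ_{K*}‖^{-1}) (J(K) − J(K*)), where K* is the optimal policy. -/
open Matrix
open scoped ENNReal NNReal

/-- Spectral radius of a real square matrix. -/
noncomputable def specRad {n : Type*} [Fintype n] [DecidableEq n]
    (M : Matrix n n ℝ) : ℝ≥0∞ :=
  ⨆ z ∈ spectrum ℂ (M.map (Complex.ofReal : ℝ → ℂ)), (‖z‖₊ : ℝ≥0∞)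

/-- The ℓ₂ → ℓ₂ operator norm of a real matrix. -/
noncomputable def opNorm {m n : Type*} [Fintype m] [Fintype n] [DecidableEq n]
    (M : Matrix m n ℝ) : ℝ :=
  ‖LinearMap.toContinuousLinearMap (Matrix.toEuclideanLin (𝕜 := ℝ) M)‖

/-- The minimal eigenvalue of a real matrix, as the infimum of its real spectrum. -/
noncomputable def minEig {n : Type*} [Fintype n] [DecidableEq n]
    (M : Matrix n n ℝ) : ℝ :=
  sInf (spectrum ℝ M)

/-!
Write `E = E_K`. By the cost difference formula, `P_L - P_K` solves the Lyapunov equation of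
`A - B L` whose source term is the advantage matrix of `L` relative to `K`; a stable Lyapunov
equation with a nonpositive source has a solution below its source. For `L = K' = K - γ E` the
advantage is `-γ Eᵀ (2 - γ (R + Bᵀ P_K B)) E ≤ -γ EᵀE` because `γ ‖R + Bᵀ P_K B‖ ≤ 1`, so
`J(K') - J(K) ≤ -γ σ_min(Ψ) ‖E‖_F²`. For `L = K*`, Lyapunov duality turns the trace against `Ψ_σ`
into a trace against `Σ_{K*}`, and completing the square in `K* - K` bounds the advantage below by
`-σ_min(R)⁻¹ EᵀE`, so `σ_min(R) (J(K) - J(K*)) ≤ ‖Σ_{K*}‖ ‖E‖_F²`. Combining the two inequalities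
gives the contraction.
-/

open Filter Topology
open scoped MatrixOrder

theorem tendsto_pow_atTop_nhds_zero_of_spectralRadius_lt_one {A : Type*} [NormedRing A]
    [NormedAlgebra ℂ A] [CompleteSpace A] {a : A} (ha : spectralRadius ℂ a < 1) :
    Tendsto (a ^ ·) atTop (𝓝 0) := by
  obtain ⟨r, hr, hr1⟩ := ENNReal.lt_iff_exists_nnreal_btwn.mp ha
  have hpow : ∀ᶠ m : ℕ in atTop, ‖a ^ m‖ ≤ (r : ℝ) ^ m := by
    filter_upwards [(spectrum.pow_nnnorm_pow_one_div_tendsto_nhds_spectralRadius a)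
      |>.eventually_lt_const hr, eventually_ge_atTop 1] with m hm hm1
    have hm0 : (m : ℝ) ≠ 0 := by positivity
    have := ENNReal.rpow_le_rpow hm.le (z := m) (by positivity)
    rw [← ENNReal.rpow_mul, one_div, inv_mul_cancel₀ hm0, ENNReal.rpow_one, ENNReal.rpow_natCast,
      ← ENNReal.coe_pow] at this
    exact_mod_cast this
  exact squeeze_zero_norm' hpow
    (tendsto_pow_atTop_nhds_zero_of_lt_one r.2 (by exact_mod_cast hr1))

namespace Matrix

variable {n m : Type*} [Fintype n] [Fintype m]

theorem tendsto_pow_atTop_nhds_zero_of_specRad_lt_one [DecidableEq n] {M : Matrix n n ℝ}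
    (hM : specRad M < 1) : Tendsto (M ^ ·) atTop (𝓝 0) := by
  let := Matrix.linftyOpNormedRing (n := n) (α := ℂ)
  let := Matrix.linftyOpNormedAlgebra (n := n) (R := ℂ) (α := ℂ)
  have hc : Tendsto ((M.map Complex.ofReal) ^ ·) atTop (𝓝 0) :=
    tendsto_pow_atTop_nhds_zero_of_spectralRadius_lt_one hM
  have hre := ((continuous_id.matrix_map Complex.continuous_re).tendsto 0).comp hc
  have hmap (k : ℕ) : ((M.map Complex.ofReal) ^ k).map Complex.re = M ^ k := by
    rw [show M.map Complex.ofReal = Complex.ofRealHom.mapMatrix M from rfl, ← map_pow]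
    ext
    simp
  simpa [Function.comp_def, hmap] using hre

theorem posSemidef_iff_dotProduct_mulVec_real {M : Matrix n n ℝ} :
    M.PosSemidef ↔ M.IsHermitian ∧ ∀ x, 0 ≤ x ⬝ᵥ (M *ᵥ x) := by
  simp only [posSemidef_iff_dotProduct_mulVec, star_trivial]

theorem PosSemidef.transpose_mul_mul_same {A : Matrix n n ℝ} (hA : A.PosSemidef)
    (G : Matrix n m ℝ) : (Gᵀ * A * G).PosSemidef := by
  simpa using hA.conjTranspose_mul_mul_same G

theorem le_of_eq_transpose_mul_mul_add [DecidableEq n] {M X N : Matrix n n ℝ}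
    (hM : specRad M < 1) (hX : X.IsHermitian) (hN : N ≤ 0) (hXN : X = Mᵀ * X * M + N) : X ≤ N := by
  have hNherm : N.IsHermitian := by simpa using (le_iff.mp hN).isHermitian.neg
  refine posSemidef_iff_dotProduct_mulVec_real.mpr ⟨hNherm.sub hX, fun x => ?_⟩
  have hNx (v : n → ℝ) : v ⬝ᵥ (N *ᵥ v) ≤ 0 := by
    have := (posSemidef_iff_dotProduct_mulVec_real.mp (le_iff.mp hN)).2 v
    simp only [zero_sub, neg_mulVec, dotProduct_neg, Left.nonneg_neg_iff] at this
    exact this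
  set q : Matrix n n ℝ → ℝ := fun T => (T *ᵥ x) ⬝ᵥ (X *ᵥ (T *ᵥ x)) with hq
  -- Along the orbit `Mᵏ x` the quadratic form of `X` increases (as `N ≤ 0`) and tends to `0`.
  have hstep (k : ℕ) : q (M ^ k) = q (M ^ (k + 1)) + (M ^ k *ᵥ x) ⬝ᵥ (N *ᵥ (M ^ k *ᵥ x)) := by
    simp only [hq, pow_succ', ← mulVec_mulVec]
    conv_lhs => rw [hXN]
    rw [add_mulVec, dotProduct_add, ← mulVec_mulVec, ← mulVec_mulVec, dotProduct_mulVec _ Mᵀ,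
      vecMul_transpose]
  have hmono : Monotone fun k => q (M ^ k) :=
    monotone_nat_of_le_succ fun k => by linarith [hstep k, hNx (M ^ k *ᵥ x)]
  have hq0 : Tendsto (fun k => q (M ^ k)) atTop (𝓝 0) := by
    have hcont : Continuous q := by
      simp only [hq]
      fun_prop
    simpa [hq, Function.comp_def] using
      (hcont.tendsto 0).comp (tendsto_pow_atTop_nhds_zero_of_specRad_lt_one hM)
  have hq1 : q (M ^ 1) ≤ 0 := hmono.ge_of_tendsto hq0 1
  have := hstep 0
  simp only [hq, pow_zero, one_mulVec] at this hq1
  rw [sub_mulVec, dotProduct_sub]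
  linarith

theorem trace_mul_nonneg [DecidableEq n] {P C : Matrix n n ℝ} (hP : 0 ≤ P) (hC : 0 ≤ C) :
    0 ≤ (P * C).trace := by
  have hsqrt : (CFC.sqrt P).IsHermitian := (CFC.sqrt_nonneg P).posSemidef.isHermitian
  have hconj : (CFC.sqrt P * C * CFC.sqrt P).PosSemidef := by
    have := hC.posSemidef.conjTranspose_mul_mul_same (CFC.sqrt P)
    rwa [hsqrt.eq] at this
  calc 0 ≤ (CFC.sqrt P * C * CFC.sqrt P).trace := hconj.trace_nonneg
    _ = (CFC.sqrt P * CFC.sqrt P * C).trace := by rw [trace_mul_cycle]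
    _ = (P * C).trace := by rw [CFC.sqrt_mul_sqrt_self P hP]

theorem trace_mul_le_trace_mul [DecidableEq n] {X Y C : Matrix n n ℝ} (h : X ≤ Y)
    (hC : 0 ≤ C) : (X * C).trace ≤ (Y * C).trace := by
  have := trace_mul_nonneg (sub_nonneg.mpr h) hC
  rwa [sub_mul, trace_sub, sub_nonneg] at this

theorem mul_trace_le_trace_mul_of_smul_one_le [DecidableEq n] {μ : ℝ} {C G : Matrix n n ℝ}
    (hC : μ • 1 ≤ C) (hG : 0 ≤ G) : μ * G.trace ≤ (G * C).trace := by
  have := trace_mul_le_trace_mul hC hG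
  rwa [smul_mul_assoc, Matrix.one_mul, trace_smul, smul_eq_mul, trace_mul_comm] at this

theorem trace_mul_le_mul_trace_of_le_smul_one [DecidableEq n] {μ : ℝ} {C G : Matrix n n ℝ}
    (hC : C ≤ μ • 1) (hG : 0 ≤ G) : (G * C).trace ≤ μ * G.trace := by
  have := trace_mul_le_trace_mul hC hG
  rwa [smul_mul_assoc, Matrix.one_mul, trace_smul, smul_eq_mul, trace_mul_comm] at this

theorem trace_mul_eq_of_lyapunov {M X N S C : Matrix n n ℝ} (hX : X = Mᵀ * X * M + N)
    (hS : S = C + M * S * Mᵀ) : (X * C).trace = (N * S).trace := by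
  have hC : C = S - M * S * Mᵀ := eq_sub_of_add_eq hS.symm
  have hcycle : (Mᵀ * X * M * S).trace = (X * (M * S * Mᵀ)).trace := by
    simp only [Matrix.mul_assoc]
    rw [trace_mul_comm]
    simp only [Matrix.mul_assoc]
  have hXS : (X * S).trace = (X * (M * S * Mᵀ)).trace + (N * S).trace := by
    conv_lhs => rw [hX]
    rw [add_mul, trace_add, hcycle]
  rw [hC, Matrix.mul_sub, trace_sub, hXS]
  ring

theorem minEig_smul_one_le [DecidableEq n] {M : Matrix n n ℝ} (hM : M.IsHermitian) :
    minEig M • 1 ≤ M := by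
  rw [← Algebra.algebraMap_eq_smul_one, algebraMap_le_iff_le_spectrum (ha := hM)]
  exact fun x hx => csInf_le M.finite_real_spectrum.bddBelow hx

theorem minEig_nonneg [DecidableEq n] {M : Matrix n n ℝ} (hM : 0 ≤ M) : 0 ≤ minEig M :=
  Real.sInf_nonneg fun _ hx => spectrum_nonneg_of_nonneg hM hx

open scoped Norms.L2Operator in
theorem le_opNorm_smul_one [DecidableEq n] {M : Matrix n n ℝ} (hM : M.IsHermitian) :
    M ≤ opNorm M • 1 := by
  rcases isEmpty_or_nonempty n with hn | hn
  · exact (Subsingleton.elim _ _).le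
  rw [← Algebra.algebraMap_eq_smul_one, le_algebraMap_iff_spectrum_le (ha := hM)]
  intro x hx
  calc x ≤ ‖x‖ := Real.le_norm_self x
    _ ≤ ‖M‖ := spectrum.norm_le_norm_of_mem hx
    _ = opNorm M := l2_opNorm_def M

end Matrix

namespace LQR

open Matrix

variable {n m : Type*} [Fintype n] [Fintype m]
  (A : Matrix n n ℝ) (B : Matrix n m ℝ) (Q : Matrix n n ℝ) (R : Matrix m m ℝ)

def bellman (K : Matrix m n ℝ) (P : Matrix n n ℝ) : Matrix n n ℝ :=
  Q + Kᵀ * R * K + (A - B * K)ᵀ * P * (A - B * K)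

def natGrad (P : Matrix n n ℝ) (K : Matrix m n ℝ) : Matrix m n ℝ :=
  (R + Bᵀ * P * B) * K - Bᵀ * P * A

/-- `xᵀ (advantage P K L) x` is the advantage of playing `L` for one step and `K` afterwards,
when `P` is the cost matrix of `K`. -/
def advantage (P : Matrix n n ℝ) (K L : Matrix m n ℝ) : Matrix n n ℝ :=
  (L - K)ᵀ * natGrad A B R P K + (natGrad A B R P K)ᵀ * (L - K)
    + (L - K)ᵀ * (R + Bᵀ * P * B) * (L - K)

variable {A B Q R}

theorem bellman_eq_add_advantage {P : Matrix n n ℝ} (hP : P.IsSymm) (hR : R.IsSymm)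
    (K L : Matrix m n ℝ) :
    bellman A B Q R L P = bellman A B Q R K P + advantage A B R P K L := by
  simp only [bellman, advantage, natGrad, transpose_sub, transpose_mul, transpose_add,
    transpose_transpose, hP.eq, hR.eq, Matrix.sub_mul, Matrix.mul_sub, Matrix.add_mul,
    Matrix.mul_add, Matrix.mul_assoc]
  abel

theorem bellman_sub_bellman (K : Matrix m n ℝ) (P P' : Matrix n n ℝ) :
    bellman A B Q R K P' - bellman A B Q R K P = (A - B * K)ᵀ * (P' - P) * (A - B * K) := by
  simp only [bellman, Matrix.mul_sub, Matrix.sub_mul]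
  abel

/-- The cost difference formula. -/
theorem sub_eq_lyapunov_advantage {K L : Matrix m n ℝ} {P P' : Matrix n n ℝ}
    (hP : P = bellman A B Q R K P) (hP' : P' = bellman A B Q R L P') (hPs : P.IsSymm)
    (hR : R.IsSymm) :
    P' - P = (A - B * L)ᵀ * (P' - P) * (A - B * L) + advantage A B R P K L := by
  have hdiff := bellman_sub_bellman (A := A) (B := B) (Q := Q) (R := R) L P P'
  rw [← hP', bellman_eq_add_advantage hPs hR K, ← hP] at hdiff
  rw [← hdiff]
  abel

theorem one_sub_smul_posSemidef [DecidableEq m] {F : Matrix m m ℝ} (hF : F.IsHermitian) {γ : ℝ}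
    (hγ : 0 ≤ γ) (hγF : γ * opNorm F ≤ 1) : (1 - γ • F).PosSemidef := by
  have hdecomp :
      1 - γ • F = γ • (opNorm F • 1 - F) + (1 - γ * opNorm F) • (1 : Matrix m m ℝ) := by
    module
  rw [hdecomp]
  exact ((le_iff.mp (le_opNorm_smul_one hF)).smul hγ).add
    (PosSemidef.one.smul (sub_nonneg.mpr hγF))

theorem advantage_natGrad_step_le [DecidableEq m] {P : Matrix n n ℝ} (hP : P.IsSymm)
    (hR : R.IsSymm) (K : Matrix m n ℝ) {γ : ℝ} (hγ : 0 ≤ γ)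
    (hγF : γ * opNorm (R + Bᵀ * P * B) ≤ 1) :
    advantage A B R P K (K - γ • natGrad A B R P K) ≤
      -(γ • ((natGrad A B R P K)ᵀ * natGrad A B R P K)) := by
  set E := natGrad A B R P K
  set F := R + Bᵀ * P * B
  have hF : F.IsHermitian := by
    simp only [isHermitian_iff_isSymm, IsSymm, F, transpose_add, transpose_mul,
      transpose_transpose, hP.eq, hR.eq, Matrix.mul_assoc]
  have hgap : -(γ • (Eᵀ * E)) - advantage A B R P K (K - γ • E) =
      γ • (Eᵀ * (1 - γ • F) * E) := by
    simp only [advantage, sub_sub_cancel_left, transpose_neg, transpose_smul, Matrix.neg_mul,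
      Matrix.mul_neg, Matrix.smul_mul, Matrix.mul_smul, Matrix.mul_sub, Matrix.sub_mul,
      Matrix.mul_one, smul_smul, neg_neg, smul_neg, Matrix.mul_assoc, E, F]
    module
  rw [le_iff, hgap]
  exact ((one_sub_smul_posSemidef hF hγ hγF).transpose_mul_mul_same E).smul hγ

theorem smul_advantage_add_natGrad_nonneg [DecidableEq m] {P : Matrix n n ℝ}
    (hP : P.PosSemidef) (hR : R.PosSemidef) (K L : Matrix m n ℝ) :
    0 ≤ minEig R • advantage A B R P K L + (natGrad A B R P K)ᵀ * natGrad A B R P K := by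
  set E := natGrad A B R P K
  set F := R + Bᵀ * P * B
  set l := minEig R
  have hl : 0 ≤ l := minEig_nonneg hR.nonneg
  have hFl : (F - l • 1).PosSemidef := by
    have : F - l • 1 = (R - l • 1) + Bᵀ * P * B := by simp only [F]; abel
    rw [this]
    exact (le_iff.mp (minEig_smul_one_le hR.isHermitian)).add (hP.transpose_mul_mul_same B)
  have hsquare : l • advantage A B R P K L + Eᵀ * E =
      (l • (L - K) + E)ᵀ * (l • (L - K) + E) + l • ((L - K)ᵀ * (F - l • 1) * (L - K)) := by
    simp only [advantage, transpose_add, transpose_smul, Matrix.add_mul, Matrix.mul_add,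
      Matrix.sub_mul, Matrix.mul_sub, Matrix.smul_mul, Matrix.mul_smul, Matrix.mul_one,
      Matrix.mul_assoc, E, F]
    module
  rw [nonneg_iff_posSemidef, hsquare]
  exact (posSemidef_conjTranspose_mul_self _).add ((hFl.transpose_mul_mul_same _).smul hl)

theorem sub_le_neg_smul_natGrad [DecidableEq n] [DecidableEq m] {K : Matrix m n ℝ}
    {P P' : Matrix n n ℝ} {γ : ℝ} (hP : P = bellman A B Q R K P)
    (hP' : P' = bellman A B Q R (K - γ • natGrad A B R P K) P') (hPs : P.IsSymm)
    (hP's : P'.IsSymm) (hR : R.IsSymm)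
    (hstab : specRad (A - B * (K - γ • natGrad A B R P K)) < 1) (hγ : 0 ≤ γ)
    (hγF : γ * opNorm (R + Bᵀ * P * B) ≤ 1) :
    P' - P ≤ -(γ • ((natGrad A B R P K)ᵀ * natGrad A B R P K)) := by
  have hstep := advantage_natGrad_step_le (A := A) (B := B) hPs hR K hγ hγF
  have hadv : advantage A B R P K (K - γ • natGrad A B R P K) ≤ 0 :=
    hstep.trans (neg_nonpos.mpr (smul_nonneg hγ
      ((posSemidef_conjTranspose_mul_self _).nonneg)))
  have hsymm : (P' - P).IsHermitian := isHermitian_iff_isSymm.mpr (hP's.sub hPs)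
  exact (le_of_eq_transpose_mul_mul_add hstab hsymm hadv
    (sub_eq_lyapunov_advantage hP hP' hPs hR)).trans hstep

/-- Gradient domination. -/
theorem minEig_mul_trace_sub_le [DecidableEq n] [DecidableEq m] {K Kstar : Matrix m n ℝ}
    {P Pstar S C : Matrix n n ℝ} (hP : P = bellman A B Q R K P) (hP0 : P.PosSemidef)
    (hPstar : Pstar = bellman A B Q R Kstar Pstar) (hR : R.PosSemidef)
    (hS : S = C + (A - B * Kstar) * S * (A - B * Kstar)ᵀ) (hS0 : S.PosSemidef) :
    minEig R * ((P - Pstar) * C).trace ≤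
      opNorm S * ((natGrad A B R P K)ᵀ * natGrad A B R P K).trace := by
  set E := natGrad A B R P K
  have hPs : P.IsSymm := isHermitian_iff_isSymm.mp hP0.isHermitian
  have hRs : R.IsSymm := isHermitian_iff_isSymm.mp hR.isHermitian
  have hdual : ((Pstar - P) * C).trace = (advantage A B R P K Kstar * S).trace :=
    trace_mul_eq_of_lyapunov (sub_eq_lyapunov_advantage hP hPstar hPs hRs) hS
  have hsquare :
      0 ≤ minEig R * (advantage A B R P K Kstar * S).trace + (Eᵀ * E * S).trace := by
    have := trace_mul_nonneg
      (smul_advantage_add_natGrad_nonneg (A := A) (B := B) hP0 hR K Kstar) hS0.nonneg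
    rwa [Matrix.add_mul, trace_add, smul_mul_assoc, trace_smul, smul_eq_mul] at this
  have hnorm : (Eᵀ * E * S).trace ≤ opNorm S * (Eᵀ * E).trace :=
    trace_mul_le_mul_trace_of_le_smul_one (le_opNorm_smul_one hS0.isHermitian)
      (posSemidef_conjTranspose_mul_self _).nonneg
  rw [← neg_sub, Matrix.neg_mul, trace_neg, hdual]
  linarith

end LQR

theorem lqr_natural_gradient_contraction_general
    (d k : ℕ) (A : Matrix (Fin d) (Fin d) ℝ) (B : Matrix (Fin d) (Fin k) ℝ)
    (K K' Kstar : Matrix (Fin k) (Fin d) ℝ) (σ γ : ℝ)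
    (Q Ψ Ψσ PK PK' Pstar Sstar : Matrix (Fin d) (Fin d) ℝ)
    (R : Matrix (Fin k) (Fin k) ℝ)
    (hΨσ : Ψσ = Ψ + σ ^ 2 • (B * Bᵀ))
    (hR : R.PosDef) (hΨ : Ψ.PosDef)
    (EK : Matrix (Fin k) (Fin d) ℝ)
    (hEK : EK = (R + Bᵀ * PK * B) * K - Bᵀ * PK * A)
    (hγpos : 0 < γ) (hγ : γ * opNorm (R + Bᵀ * PK * B) ≤ 1)
    (hK' : K' = K - γ • EK)
    (hstab' : specRad (A - B * K') < 1)
    (hPKpd : PK.PosDef) (hPK : PK = Q + Kᵀ * R * K + (A - B * K)ᵀ * PK * (A - B * K))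
    (hPK'pd : PK'.PosDef)
    (hPK' : PK' = Q + K'ᵀ * R * K' + (A - B * K')ᵀ * PK' * (A - B * K'))
    (hPstar : Pstar = Q + Kstarᵀ * R * Kstar + (A - B * Kstar)ᵀ * Pstar * (A - B * Kstar))
    (hSstarpd : Sstar.PosDef)
    (hSstar : Sstar = Ψσ + (A - B * Kstar) * Sstar * (A - B * Kstar)ᵀ) :
    ((PK' * Ψσ).trace + σ ^ 2 * R.trace) - ((Pstar * Ψσ).trace + σ ^ 2 * R.trace) ≤
      (1 - γ * minEig Ψ * minEig R * (opNorm Sstar)⁻¹) *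
        (((PK * Ψσ).trace + σ ^ 2 * R.trace) - ((Pstar * Ψσ).trace + σ ^ 2 * R.trace)) := by
  subst hK' hEK
  set E := LQR.natGrad A B R PK K
  have hEE : 0 ≤ Eᵀ * E := (posSemidef_conjTranspose_mul_self E).nonneg
  have hΨ0 : 0 ≤ minEig Ψ := minEig_nonneg hΨ.posSemidef.nonneg
  replace hΨσ : minEig Ψ • 1 ≤ Ψσ := by
    rw [hΨσ]
    exact (minEig_smul_one_le hΨ.isHermitian).trans (le_add_of_nonneg_right
      (smul_nonneg (sq_nonneg σ) (posSemidef_self_mul_conjTranspose B).nonneg))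
  have hdesc := LQR.sub_le_neg_smul_natGrad hPK hPK' (isHermitian_iff_isSymm.mp hPKpd.isHermitian)
    (isHermitian_iff_isSymm.mp hPK'pd.isHermitian) (isHermitian_iff_isSymm.mp hR.isHermitian)
    hstab' hγpos.le hγ
  have hdescent : ((PK' - PK) * Ψσ).trace ≤ -(γ * (minEig Ψ * (Eᵀ * E).trace)) :=
    calc ((PK' - PK) * Ψσ).trace ≤ (-(γ • (Eᵀ * E)) * Ψσ).trace :=
          trace_mul_le_trace_mul hdesc ((smul_nonneg hΨ0 zero_le_one).trans hΨσ)
      _ = -(γ * (Eᵀ * E * Ψσ).trace) := by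
          rw [Matrix.neg_mul, smul_mul_assoc, trace_neg, trace_smul, smul_eq_mul]
      _ ≤ -(γ * (minEig Ψ * (Eᵀ * E).trace)) := neg_le_neg (mul_le_mul_of_nonneg_left
          (mul_trace_le_trace_mul_of_smul_one_le hΨσ hEE) hγpos.le)
  have hdom := LQR.minEig_mul_trace_sub_le hPK hPKpd.posSemidef hPstar hR.posSemidef hSstar
    hSstarpd.posSemidef
  rw [Matrix.sub_mul, trace_sub] at hdom hdescent
  have hratio : minEig R * ((PK * Ψσ).trace - (Pstar * Ψσ).trace) * (opNorm Sstar)⁻¹ ≤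
      (Eᵀ * E).trace := by
    rw [← div_eq_mul_inv]
    exact div_le_of_le_mul₀ (norm_nonneg _) hEE.posSemidef.trace_nonneg (by linarith)
  have := mul_le_mul_of_nonneg_left hratio (mul_nonneg hγpos.le hΨ0)
  linarith

/-- one-step natural policy gradient contraction: with
`K' = K − γ E_K` and `γ ‖R + Bᵀ P_K B‖ ≤ 1`,
`J(K') − J(K*) ≤ (1 − γ σ_min(Ψ) σ_min(R) ‖Σ_{K*}‖⁻¹)(J(K) − J(K*))`,
where `J(K) = tr(P_K Ψ_σ) + σ² tr(R)` and `K*` is optimal. -/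
theorem lqr_natural_gradient_contraction
    (d k : ℕ) (A : Matrix (Fin d) (Fin d) ℝ) (B : Matrix (Fin d) (Fin k) ℝ)
    (K K' Kstar : Matrix (Fin k) (Fin d) ℝ) (σ γ : ℝ)
    (Q Ψ Ψσ PK PK' Pstar Sstar : Matrix (Fin d) (Fin d) ℝ)
    (R : Matrix (Fin k) (Fin k) ℝ)
    (hΨσ : Ψσ = Ψ + σ ^ 2 • (B * Bᵀ))
    (hQ : Q.PosDef) (hR : R.PosDef) (hΨ : Ψ.PosDef)
    (EK : Matrix (Fin k) (Fin d) ℝ)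
    (hEK : EK = (R + Bᵀ * PK * B) * K - Bᵀ * PK * A)
    (hγpos : 0 < γ) (hγ : γ * opNorm (R + Bᵀ * PK * B) ≤ 1)
    (hK' : K' = K - γ • EK)
    (hstab : specRad (A - B * K) < 1) (hstab' : specRad (A - B * K') < 1)
    (hstabstar : specRad (A - B * Kstar) < 1)
    (hPKpd : PK.PosDef) (hPK : PK = Q + Kᵀ * R * K + (A - B * K)ᵀ * PK * (A - B * K))
    (hPK'pd : PK'.PosDef)
    (hPK' : PK' = Q + K'ᵀ * R * K' + (A - B * K')ᵀ * PK' * (A - B * K'))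
    (hPstarpd : Pstar.PosDef)
    (hPstar : Pstar = Q + Kstarᵀ * R * Kstar + (A - B * Kstar)ᵀ * Pstar * (A - B * Kstar))
    (hSstarpd : Sstar.PosDef)
    (hSstar : Sstar = Ψσ + (A - B * Kstar) * Sstar * (A - B * Kstar)ᵀ)
    (hopt : ∀ (K'' : Matrix (Fin k) (Fin d) ℝ) (P'' : Matrix (Fin d) (Fin d) ℝ),
      specRad (A - B * K'') < 1 → P''.PosDef →
      P'' = Q + K''ᵀ * R * K'' + (A - B * K'')ᵀ * P'' * (A - B * K'') →
      (Pstar * Ψσ).trace + σ ^ 2 * R.trace ≤ (P'' * Ψσ).trace + σ ^ 2 * R.trace) :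
    ((PK' * Ψσ).trace + σ ^ 2 * R.trace) - ((Pstar * Ψσ).trace + σ ^ 2 * R.trace) ≤
      (1 - γ * minEig Ψ * minEig R * (opNorm Sstar)⁻¹) *
        (((PK * Ψσ).trace + σ ^ 2 * R.trace) - ((Pstar * Ψσ).trace + σ ^ 2 * R.trace)) :=
  lqr_natural_gradient_contraction_general d k A B K K' Kstar σ γ Q Ψ Ψσ PK PK' Pstar Sstar R hΨσ hR
    hΨ EK hEK hγpos hγ hK' hstab' hPKpd hPK hPK'pd hPK' hPstar hSstarpd hSstar
end

section
/- Monotonicity of average cost along exact natural gradient: if K is stabilizing, γ (‖R‖ + σ_min(Ψ)^{-1} ‖B‖² J(K)) ≤ 1, and K' = K − γ E_K, then J(K') − J(K) ≤ −γ σ_min(Ψ) tr(E_K^T E_K) ≤ 0; in particular J(K') ≤ J(K). -/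
/-!
Write `L' = A - B K'`, `G = R + Bᵀ P_K B` and `Δ = P_{K'} - P_K`. Subtracting the two Lyapunov
equations, the quadratic terms in `K' - K = -γ E_K` give
`Δ - L'ᵀ Δ L' = γ² E_Kᵀ G E_K - 2γ E_Kᵀ E_K`, and since `yᵀ G y ≤ (‖R‖ + ‖B‖² tr P_K) |y|²` with
`tr P_K ≤ J(K) / σ_min(Ψ)`, the step-size condition makes this at most `-γ E_Kᵀ E_K`.
As `L'` is stable, `Ψ_σ = S - L' S L'ᵀ` for `S = Σ_t L'^t Ψ_σ L'^tᵀ ⪰ Ψ_σ`, so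
`J(K') - J(K) = tr(Δ Ψ_σ) = tr((Δ - L'ᵀ Δ L') S) ≤ -γ tr(E_Kᵀ E_K Ψ_σ) ≤ -γ σ_min(Ψ) tr(E_Kᵀ E_K)`.
-/

open Matrix
open scoped ENNReal NNReal

open Filter

namespace Matrix

variable {m n : Type*} [Fintype m] [Fintype n]

section PosSemidef

open scoped MatrixOrder

lemma PosSemidef.exists_eq_transpose_mul_self [DecidableEq n] {A : Matrix n n ℝ}
    (hA : A.PosSemidef) : ∃ C : Matrix n n ℝ, A = Cᵀ * C := by
  refine ⟨CFC.sqrt A, ?_⟩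
  rw [← conjTranspose_eq_transpose_of_trivial, (CFC.sqrt_nonneg A).posSemidef.isHermitian.eq,
    CFC.sqrt_mul_sqrt_self A hA.nonneg]

lemma PosSemidef.trace_mul_nonneg [DecidableEq n] {A B : Matrix n n ℝ} (hA : A.PosSemidef)
    (hB : B.PosSemidef) : 0 ≤ (A * B).trace := by
  obtain ⟨C, rfl⟩ := hA.exists_eq_transpose_mul_self
  rw [Matrix.mul_assoc, trace_mul_comm]
  simpa [conjTranspose_eq_transpose_of_trivial] using
    (hB.mul_mul_conjTranspose_same C).trace_nonneg

lemma PosSemidef.mul_trace_le_trace_mul [DecidableEq n] {X S : Matrix n n ℝ} {c : ℝ}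
    (hX : X.PosSemidef) (hS : (S - c • 1).PosSemidef) : c * X.trace ≤ (X * S).trace := by
  have h := hX.trace_mul_nonneg hS
  rwa [Matrix.mul_sub, trace_sub, Matrix.mul_smul, Matrix.mul_one, trace_smul, smul_eq_mul,
    sub_nonneg] at h

lemma dotProduct_transpose_mul_mulVec_le (C : Matrix m n ℝ) (x : n → ℝ) :
    x ⬝ᵥ ((Cᵀ * C) *ᵥ x) ≤ (Cᵀ * C).trace * (x ⬝ᵥ x) := by
  have htrace : (Cᵀ * C).trace = ∑ i, C i ⬝ᵥ C i := by
    simp only [trace, diag, mul_apply, transpose_apply, dotProduct]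
    exact Finset.sum_comm
  calc x ⬝ᵥ ((Cᵀ * C) *ᵥ x) = ∑ i, (C i ⬝ᵥ x) ^ 2 := by
        rw [← mulVec_mulVec, dotProduct_mulVec, vecMul_transpose]
        simp [dotProduct, mulVec, sq]
    _ ≤ ∑ i, (C i ⬝ᵥ C i) * (x ⬝ᵥ x) := Finset.sum_le_sum fun i _ => by
        simpa [dotProduct, sq] using Finset.sum_mul_sq_le_sq_mul_sq Finset.univ (C i) x
    _ = (Cᵀ * C).trace * (x ⬝ᵥ x) := by rw [htrace, Finset.sum_mul]

lemma PosSemidef.dotProduct_mulVec_le_trace_mul [DecidableEq n] {P : Matrix n n ℝ}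
    (hP : P.PosSemidef) (x : n → ℝ) : x ⬝ᵥ (P *ᵥ x) ≤ P.trace * (x ⬝ᵥ x) := by
  obtain ⟨C, rfl⟩ := hP.exists_eq_transpose_mul_self
  exact dotProduct_transpose_mul_mulVec_le C x

lemma posSemidef_transpose_mul_self (E : Matrix m n ℝ) : (Eᵀ * E).PosSemidef := by
  simpa [conjTranspose_eq_transpose_of_trivial] using posSemidef_conjTranspose_mul_self E

lemma posSemidef_sq_smul_mul_transpose (σ : ℝ) (B : Matrix n m ℝ) :
    (σ ^ 2 • (B * Bᵀ)).PosSemidef := by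
  simpa [conjTranspose_eq_transpose_of_trivial] using
    (posSemidef_self_mul_conjTranspose B).smul (sq_nonneg σ)

lemma posSemidef_one_sub_smul_of_dotProduct_mulVec_le [DecidableEq n] {G : Matrix n n ℝ}
    {c γ : ℝ} (hG : Gᵀ = G) (hGc : ∀ y, y ⬝ᵥ (G *ᵥ y) ≤ c * (y ⬝ᵥ y)) (hγ : 0 ≤ γ)
    (hγc : γ * c ≤ 1) : (1 - γ • G).PosSemidef := by
  refine .of_dotProduct_mulVec_nonneg ?_ fun y => ?_
  · rw [IsHermitian, conjTranspose_eq_transpose_of_trivial, transpose_sub, transpose_smul, hG,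
      transpose_one]
  · have hy : 0 ≤ y ⬝ᵥ y := Finset.sum_nonneg fun i _ => mul_self_nonneg (y i)
    have hGy := mul_le_mul_of_nonneg_left (hGc y) hγ
    simp only [star_trivial, sub_mulVec, one_mulVec, smul_mulVec, dotProduct_sub,
      dotProduct_smul, smul_eq_mul]
    nlinarith

end PosSemidef

section minEig

variable [DecidableEq n]

lemma IsHermitian.minEig_le {A : Matrix n n ℝ} (hA : A.IsHermitian) {a : ℝ}
    (ha : a ∈ spectrum ℝ A) : minEig A ≤ a := by
  refine csInf_le ?_ ha
  rw [hA.spectrum_real_eq_range_eigenvalues]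
  exact (Set.finite_range _).bddBelow

lemma IsHermitian.posSemidef_sub_minEig_smul_one {A : Matrix n n ℝ} (hA : A.IsHermitian) :
    (A - minEig A • 1).PosSemidef := by
  refine posSemidef_iff_isHermitian_and_spectrum_nonneg.mpr
    ⟨hA.sub (isHermitian_one.smul (.all _)), fun a ha => ?_⟩
  rw [← Algebra.algebraMap_eq_smul_one, ← spectrum.sub_singleton_eq] at ha
  obtain ⟨b, hb, _, rfl, rfl⟩ := ha
  exact sub_nonneg.mpr (hA.minEig_le hb)

lemma PosSemidef.minEig_nonneg {A : Matrix n n ℝ} (hA : A.PosSemidef) : 0 ≤ minEig A :=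
  Real.sInf_nonneg (posSemidef_iff_isHermitian_and_spectrum_nonneg.mp hA).2

lemma PosDef.minEig_pos [Nonempty n] {A : Matrix n n ℝ} (hA : A.PosDef) : 0 < minEig A := by
  rw [minEig, hA.1.spectrum_real_eq_range_eigenvalues]
  obtain ⟨i, hi⟩ := (Set.range_nonempty hA.1.eigenvalues).csInf_mem (Set.finite_range _)
  rw [← hi]
  exact hA.eigenvalues_pos i

lemma PosSemidef.trace_le_inv_minEig_mul_trace_mul {P Ψ : Matrix n n ℝ} (hP : P.PosSemidef)
    (hΨ : Ψ.PosDef) : P.trace ≤ (minEig Ψ)⁻¹ * (P * Ψ).trace := by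
  cases isEmpty_or_nonempty n
  · simp [trace]
  · rw [le_inv_mul_iff₀ hΨ.minEig_pos]
    exact hP.mul_trace_le_trace_mul hΨ.1.posSemidef_sub_minEig_smul_one

end minEig

section opNorm

open scoped Matrix.Norms.L2Operator

lemma norm_toLp_sq (x : n → ℝ) : ‖(WithLp.toLp 2 x : EuclideanSpace ℝ n)‖ ^ 2 = x ⬝ᵥ x := by
  rw [EuclideanSpace.norm_sq_eq]
  simp [dotProduct, sq]

variable [DecidableEq n]

lemma dotProduct_mulVec_self_le_opNorm_sq (B : Matrix m n ℝ) (x : n → ℝ) :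
    (B *ᵥ x) ⬝ᵥ (B *ᵥ x) ≤ opNorm B ^ 2 * (x ⬝ᵥ x) := by
  rw [← norm_toLp_sq, ← norm_toLp_sq, ← mul_pow]
  exact pow_le_pow_left₀ (norm_nonneg _) (l2_opNorm_mulVec B (WithLp.toLp 2 x)) 2

lemma dotProduct_mulVec_le_opNorm (R : Matrix n n ℝ) (x : n → ℝ) :
    x ⬝ᵥ (R *ᵥ x) ≤ opNorm R * (x ⬝ᵥ x) := by
  let toE : (n → ℝ) → EuclideanSpace ℝ n := WithLp.toLp 2
  rw [← norm_toLp_sq]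
  calc x ⬝ᵥ (R *ᵥ x) = inner ℝ (toE x) (toE (R *ᵥ x)) := by
        simp [toE, PiLp.inner_apply, dotProduct, mul_comm]
    _ ≤ ‖toE x‖ * ‖toE (R *ᵥ x)‖ := real_inner_le_norm _ _
    _ ≤ ‖toE x‖ * (opNorm R * ‖toE x‖) :=
        mul_le_mul_of_nonneg_left (l2_opNorm_mulVec R _) (norm_nonneg _)
    _ = opNorm R * ‖toE x‖ ^ 2 := by ring

lemma dotProduct_mulVec_add_transpose_mul_mul_le [DecidableEq m] {P : Matrix m m ℝ}
    (hP : P.PosSemidef) (R : Matrix n n ℝ) (B : Matrix m n ℝ) (y : n → ℝ) :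
    y ⬝ᵥ ((R + Bᵀ * P * B) *ᵥ y) ≤ (opNorm R + opNorm B ^ 2 * P.trace) * (y ⬝ᵥ y) := by
  have hPB : y ⬝ᵥ ((Bᵀ * P * B) *ᵥ y) ≤ P.trace * (opNorm B ^ 2 * (y ⬝ᵥ y)) := by
    rw [← mulVec_mulVec, ← mulVec_mulVec, dotProduct_mulVec, vecMul_transpose]
    exact (hP.dotProduct_mulVec_le_trace_mul _).trans
      (mul_le_mul_of_nonneg_left (dotProduct_mulVec_self_le_opNorm_sq B y) hP.trace_nonneg)
  rw [add_mulVec, dotProduct_add]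
  linarith [dotProduct_mulVec_le_opNorm R y]

end opNorm

section Lyapunov

/- The Frobenius norm is submultiplicative, invariant under transposition and under the entrywise
embedding `ℝ → ℂ`; the last point lets Gelfand's formula for the complexification of `L`, whose
spectral radius is `specRad L`, bound `‖L ^ t‖`. -/
attribute [local instance] frobeniusNormedAddCommGroup frobeniusNormedRing frobeniusNormedAlgebra

variable [DecidableEq n]

lemma exists_lt_one_eventually_norm_pow_le {L : Matrix n n ℝ} (hL : specRad L < 1) :
    ∃ r : ℝ, 0 ≤ r ∧ r < 1 ∧ ∀ᶠ t : ℕ in atTop, ‖L ^ t‖ ≤ r ^ t := by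
  have : CompleteSpace (Matrix n n ℂ) := FiniteDimensional.complete ℂ _
  set LC := L.map (Complex.ofReal : ℝ → ℂ)
  obtain ⟨r, hr, hr1⟩ :=
    ENNReal.lt_iff_exists_nnreal_btwn.mp (show spectralRadius ℂ LC < 1 from hL)
  refine ⟨r, r.2, by exact_mod_cast hr1, ?_⟩
  have hgelfand := spectrum.pow_nnnorm_pow_one_div_tendsto_nhds_spectralRadius LC
  filter_upwards [hgelfand.eventually_lt_const hr, eventually_ge_atTop 1] with t ht ht1
  have hnorm : ‖L ^ t‖₊ = ‖LC ^ t‖₊ := by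
    rw [show LC ^ t = (L ^ t).map (Complex.ofReal : ℝ → ℂ) from
      (RingHom.map_pow Complex.ofRealHom.mapMatrix L t).symm,
      frobenius_nnnorm_map_eq _ _ fun a => by simp]
  rw [one_div, ← ENNReal.coe_rpow_of_nonneg _ (by positivity), ENNReal.coe_lt_coe,
    NNReal.rpow_inv_lt_iff (by positivity), NNReal.rpow_natCast, ← hnorm] at ht
  exact_mod_cast ht.le

lemma summable_pow_mul_mul_transpose_pow {L : Matrix n n ℝ} (hL : specRad L < 1)
    (X : Matrix n n ℝ) : Summable fun t : ℕ => L ^ t * X * Lᵀ ^ t := by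
  obtain ⟨r, hr0, hr1, hr⟩ := exists_lt_one_eventually_norm_pow_le hL
  refine ((summable_geometric_of_lt_one (r := r ^ 2) (by positivity) (by nlinarith)).mul_left ‖X‖
    |>.of_norm_bounded_eventually_nat ?_)
  filter_upwards [hr] with t ht
  calc ‖L ^ t * X * Lᵀ ^ t‖ ≤ ‖L ^ t * X‖ * ‖(L ^ t)ᵀ‖ := by
        rw [transpose_pow]; exact norm_mul_le _ _
    _ ≤ ‖L ^ t‖ * ‖X‖ * ‖L ^ t‖ := by
        rw [frobenius_norm_transpose]; gcongr; exact norm_mul_le _ _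
    _ ≤ r ^ t * ‖X‖ * r ^ t := by gcongr
    _ = ‖X‖ * (r ^ 2) ^ t := by ring

lemma exists_posSemidef_sub_mul_mul_transpose_eq {L X : Matrix n n ℝ} (hL : specRad L < 1)
    (hX : X.PosSemidef) : ∃ S : Matrix n n ℝ, S.PosSemidef ∧ S - L * S * Lᵀ = X := by
  set f : ℕ → Matrix n n ℝ := fun t => L ^ t * X * Lᵀ ^ t
  have hf : HasSum f (∑' t, f t) := (summable_pow_mul_mul_transpose_pow hL X).hasSum
  have hf_psd (t : ℕ) : (f t).PosSemidef := by
    simpa [f, conjTranspose_eq_transpose_of_trivial, transpose_pow] using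
      hX.mul_mul_conjTranspose_same (L ^ t)
  refine ⟨∑' t, f t, .of_dotProduct_mulVec_nonneg ?_ fun x => ?_, ?_⟩
  · rw [IsHermitian, conjTranspose_eq_transpose_of_trivial, transpose_tsum]
    exact tsum_congr fun t => by
      simpa [conjTranspose_eq_transpose_of_trivial] using (hf_psd t).1.eq
  · have hcont : Continuous fun M : Matrix n n ℝ => x ⬝ᵥ (M *ᵥ x) := by fun_prop
    refine hasSum_le (fun t => ?_) hasSum_zero
      (hf.map (AddMonoidHom.mk' (fun M : Matrix n n ℝ => x ⬝ᵥ (M *ᵥ x))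
        fun M N => by simp [add_mulVec, dotProduct_add]) hcont)
    simpa using (hf_psd t).dotProduct_mulVec_nonneg x
  · have hshift : HasSum (fun t => f (t + 1)) (∑' t, f t - X) := by
      refine (hasSum_nat_add_iff 1).mpr ?_
      simpa [f] using hf
    have hconj : HasSum (fun t => f (t + 1)) (L * (∑' t, f t) * Lᵀ) := by
      have hstep : (fun t => f (t + 1)) = fun t => L * f t * Lᵀ := by
        ext1 t
        simp only [f, pow_succ' L, pow_succ Lᵀ, Matrix.mul_assoc]
      rw [hstep]
      exact hf.map (ContinuousLinearMap.mulLeftRight ℝ _ L Lᵀ) (ContinuousLinearMap.continuous _)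
    rw [hconj.unique hshift, sub_sub_cancel]

end Lyapunov

lemma trace_mul_sub_mul_mul_transpose (M S L : Matrix n n ℝ) :
    (M * (S - L * S * Lᵀ)).trace = ((M - Lᵀ * M * L) * S).trace := by
  rw [Matrix.mul_sub, Matrix.sub_mul, trace_sub, trace_sub, ← Matrix.mul_assoc M,
    trace_mul_comm _ Lᵀ]
  simp only [Matrix.mul_assoc]

lemma trace_mul_le_neg_trace_mul_of_posSemidef_stein [DecidableEq n] {L X M W : Matrix n n ℝ}
    (hL : specRad L < 1) (hX : X.PosSemidef) (hW : W.PosSemidef)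
    (hM : (-W - (M - Lᵀ * M * L)).PosSemidef) : (M * X).trace ≤ -(W * X).trace := by
  -- `X = S - L S Lᵀ` with `S ⪰ X`, so `tr(M X) = tr((M - Lᵀ M L) S) ≤ -tr(W S) ≤ -tr(W X)`.
  obtain ⟨S, hS, rfl⟩ := exists_posSemidef_sub_mul_mul_transpose_eq hL hX
  have hMS := hM.trace_mul_nonneg hS
  have hWS := hW.trace_mul_nonneg (hS.mul_mul_conjTranspose_same L)
  rw [conjTranspose_eq_transpose_of_trivial] at hWS
  rw [Matrix.sub_mul, trace_sub, Matrix.neg_mul, trace_neg] at hMS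
  rw [trace_mul_sub_mul_mul_transpose, Matrix.mul_sub, trace_sub]
  linarith

end Matrix

namespace LQR

variable {m n : Type*} [Fintype m] [Fintype n]

lemma cost_sub_eq {A P : Matrix n n ℝ} {B : Matrix n m ℝ} {K K' : Matrix m n ℝ}
    {R : Matrix m m ℝ} (hP : Pᵀ = P) (hR : Rᵀ = R) :
    K'ᵀ * R * K' + (A - B * K')ᵀ * P * (A - B * K')
        - (Kᵀ * R * K + (A - B * K)ᵀ * P * (A - B * K))
      = (K' - K)ᵀ * (R + Bᵀ * P * B) * (K' - K)
        + (K' - K)ᵀ * ((R + Bᵀ * P * B) * K - Bᵀ * P * A)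
        + ((R + Bᵀ * P * B) * K - Bᵀ * P * A)ᵀ * (K' - K) := by
  simp only [transpose_sub, transpose_add, transpose_mul, transpose_transpose, hP, hR,
    Matrix.sub_mul, Matrix.mul_sub, Matrix.add_mul, Matrix.mul_add, Matrix.mul_assoc]
  abel

lemma cost_sub_eq_of_gradient_step {A P : Matrix n n ℝ} {B : Matrix n m ℝ}
    {K K' E : Matrix m n ℝ} {R : Matrix m m ℝ} {γ : ℝ} (hP : Pᵀ = P) (hR : Rᵀ = R)
    (hE : E = (R + Bᵀ * P * B) * K - Bᵀ * P * A) (hK' : K' = K - γ • E) :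
    K'ᵀ * R * K' + (A - B * K')ᵀ * P * (A - B * K')
        - (Kᵀ * R * K + (A - B * K)ᵀ * P * (A - B * K))
      = γ ^ 2 • (Eᵀ * (R + Bᵀ * P * B) * E) - (2 * γ) • (Eᵀ * E) := by
  rw [cost_sub_eq hP hR, ← hE, hK', sub_sub_cancel_left]
  simp only [transpose_neg, transpose_smul, Matrix.neg_mul, Matrix.mul_neg, Matrix.smul_mul,
    Matrix.mul_smul]
  module

lemma lyapunov_sub_eq_of_gradient_step {A Q P P' : Matrix n n ℝ} {B : Matrix n m ℝ}
    {K K' E : Matrix m n ℝ} {R : Matrix m m ℝ} {γ : ℝ} (hP : Pᵀ = P) (hR : Rᵀ = R)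
    (hE : E = (R + Bᵀ * P * B) * K - Bᵀ * P * A) (hK' : K' = K - γ • E)
    (hPK : P = Q + Kᵀ * R * K + (A - B * K)ᵀ * P * (A - B * K))
    (hPK' : P' = Q + K'ᵀ * R * K' + (A - B * K')ᵀ * P' * (A - B * K')) :
    (P' - P) - (A - B * K')ᵀ * (P' - P) * (A - B * K')
      = γ ^ 2 • (Eᵀ * (R + Bᵀ * P * B) * E) - (2 * γ) • (Eᵀ * E) := by
  rw [← cost_sub_eq_of_gradient_step hP hR hE hK']
  have h' := sub_eq_of_eq_add hPK'
  have h := sub_eq_of_eq_add hPK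
  calc (P' - P) - (A - B * K')ᵀ * (P' - P) * (A - B * K')
      = (P' - (A - B * K')ᵀ * P' * (A - B * K')) - (P - (A - B * K)ᵀ * P * (A - B * K))
        + ((A - B * K')ᵀ * P * (A - B * K') - (A - B * K)ᵀ * P * (A - B * K)) := by noncomm_ring
    _ = _ := by rw [h', h]; abel

lemma trace_le_inv_minEig_mul_cost [DecidableEq n] {P Ψ : Matrix n n ℝ} {B : Matrix n m ℝ}
    {R : Matrix m m ℝ} (hP : P.PosSemidef) (hΨ : Ψ.PosDef) (hR : R.PosSemidef) (σ : ℝ) :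
    P.trace ≤ (minEig Ψ)⁻¹ * ((P * (Ψ + σ ^ 2 • (B * Bᵀ))).trace + σ ^ 2 * R.trace) := by
  refine (hP.trace_le_inv_minEig_mul_trace_mul hΨ).trans
    (mul_le_mul_of_nonneg_left ?_ (inv_nonneg.mpr hΨ.posSemidef.minEig_nonneg))
  rw [Matrix.mul_add, trace_add]
  nlinarith [hP.trace_mul_nonneg (posSemidef_sq_smul_mul_transpose σ B), hR.trace_nonneg]

lemma trace_sub_mul_le_of_gradient_step [DecidableEq m] [DecidableEq n]
    {A Q P P' X : Matrix n n ℝ} {B : Matrix n m ℝ} {K K' E : Matrix m n ℝ} {R : Matrix m m ℝ}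
    {γ : ℝ} (hP : Pᵀ = P) (hR : Rᵀ = R) (hE : E = (R + Bᵀ * P * B) * K - Bᵀ * P * A)
    (hK' : K' = K - γ • E)
    (hPK : P = Q + Kᵀ * R * K + (A - B * K)ᵀ * P * (A - B * K))
    (hPK' : P' = Q + K'ᵀ * R * K' + (A - B * K')ᵀ * P' * (A - B * K'))
    (hL : specRad (A - B * K') < 1) (hX : X.PosSemidef) (hγ : 0 ≤ γ)
    (hG : (1 - γ • (R + Bᵀ * P * B)).PosSemidef) :
    ((P' - P) * X).trace ≤ -γ * (Eᵀ * E * X).trace := by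
  have hgap :
      (-(γ • (Eᵀ * E)) - ((P' - P) - (A - B * K')ᵀ * (P' - P) * (A - B * K'))).PosSemidef := by
    rw [lyapunov_sub_eq_of_gradient_step hP hR hE hK' hPK hPK']
    -- the left side is `γ Eᵀ (1 - γ (R + Bᵀ P B)) E`
    convert (hG.conjTranspose_mul_mul_same E).smul hγ using 1
    simp only [conjTranspose_eq_transpose_of_trivial, Matrix.mul_sub, Matrix.sub_mul,
      Matrix.mul_smul, Matrix.smul_mul, Matrix.mul_one, smul_sub, smul_smul]
    module
  have h := trace_mul_le_neg_trace_mul_of_posSemidef_stein hL hX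
    ((posSemidef_transpose_mul_self E).smul hγ) hgap
  rwa [Matrix.smul_mul, trace_smul, smul_eq_mul, ← neg_mul] at h

end LQR

theorem lqr_natural_gradient_monotone_general
    (d k : ℕ) (A : Matrix (Fin d) (Fin d) ℝ) (B : Matrix (Fin d) (Fin k) ℝ)
    (K K' : Matrix (Fin k) (Fin d) ℝ) (σ γ : ℝ)
    (Q Ψ Ψσ PK PK' : Matrix (Fin d) (Fin d) ℝ) (R : Matrix (Fin k) (Fin k) ℝ)
    (hΨσ : Ψσ = Ψ + σ ^ 2 • (B * Bᵀ))
    (hR : R.PosDef) (hΨ : Ψ.PosDef)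
    (EK : Matrix (Fin k) (Fin d) ℝ)
    (hEK : EK = (R + Bᵀ * PK * B) * K - Bᵀ * PK * A)
    (hγpos : 0 < γ)
    (hγ : γ * (opNorm R + (minEig Ψ)⁻¹ * opNorm B ^ 2 *
      ((PK * Ψσ).trace + σ ^ 2 * R.trace)) ≤ 1)
    (hK' : K' = K - γ • EK)
    (hstab' : specRad (A - B * K') < 1)
    (hPKpd : PK.PosDef) (hPK : PK = Q + Kᵀ * R * K + (A - B * K)ᵀ * PK * (A - B * K))
    (hPK' : PK' = Q + K'ᵀ * R * K' + (A - B * K')ᵀ * PK' * (A - B * K')) :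
    ((PK' * Ψσ).trace + σ ^ 2 * R.trace) - ((PK * Ψσ).trace + σ ^ 2 * R.trace) ≤
        -γ * minEig Ψ * (EKᵀ * EK).trace ∧
      -γ * minEig Ψ * (EKᵀ * EK).trace ≤ 0 ∧
      (PK' * Ψσ).trace + σ ^ 2 * R.trace ≤ (PK * Ψσ).trace + σ ^ 2 * R.trace := by
  have hPK_symm : PKᵀ = PK := (isHermitian_iff_isSymm.mp hPKpd.1).eq
  have hR_symm : Rᵀ = R := (isHermitian_iff_isSymm.mp hR.1).eq
  have hBB := posSemidef_sq_smul_mul_transpose σ B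
  have hΨσ_ge : (Ψσ - minEig Ψ • 1).PosSemidef := by
    rw [hΨσ, add_sub_right_comm]
    exact hΨ.1.posSemidef_sub_minEig_smul_one.add hBB
  have hEE := posSemidef_transpose_mul_self EK
  have hstep : γ * (opNorm R + opNorm B ^ 2 * PK.trace) ≤ 1 := by
    have hPK_trace := LQR.trace_le_inv_minEig_mul_cost (B := B) hPKpd.posSemidef hΨ hR.posSemidef σ
    rw [← hΨσ] at hPK_trace
    nlinarith [mul_le_mul_of_nonneg_left hPK_trace (mul_nonneg hγpos.le (sq_nonneg (opNorm B)))]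
  have hG := posSemidef_one_sub_smul_of_dotProduct_mulVec_le
    (by simp [hPK_symm, hR_symm, Matrix.mul_assoc])
    (dotProduct_mulVec_add_transpose_mul_mul_le hPKpd.posSemidef R B) hγpos.le hstep
  have hdescent := LQR.trace_sub_mul_le_of_gradient_step hPK_symm hR_symm hEK hK' hPK hPK' hstab'
    (hΨσ ▸ hΨ.posSemidef.add hBB) hγpos.le hG
  have hbound := mul_le_mul_of_nonneg_left (hEE.mul_trace_le_trace_mul hΨσ_ge) hγpos.le
  have hgap := mul_nonneg (mul_nonneg hγpos.le hΨ.posSemidef.minEig_nonneg) hEE.trace_nonneg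
  rw [Matrix.sub_mul, trace_sub] at hdescent
  refine ⟨?_, ?_, ?_⟩ <;> linarith

/-- monotonicity along exact natural gradient: if `K` is stabilizing,
`γ (‖R‖ + σ_min(Ψ)⁻¹ ‖B‖² J(K)) ≤ 1` and `K' = K − γ E_K`, then
`J(K') − J(K) ≤ −γ σ_min(Ψ) tr(E_Kᵀ E_K) ≤ 0`; in particular `J(K') ≤ J(K)`,
where `J(K) = tr(P_K Ψ_σ) + σ² tr(R)`. -/
theorem lqr_natural_gradient_monotone
    (d k : ℕ) (A : Matrix (Fin d) (Fin d) ℝ) (B : Matrix (Fin d) (Fin k) ℝ)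
    (K K' : Matrix (Fin k) (Fin d) ℝ) (σ γ : ℝ)
    (Q Ψ Ψσ PK PK' : Matrix (Fin d) (Fin d) ℝ) (R : Matrix (Fin k) (Fin k) ℝ)
    (hΨσ : Ψσ = Ψ + σ ^ 2 • (B * Bᵀ))
    (hQ : Q.PosDef) (hR : R.PosDef) (hΨ : Ψ.PosDef)
    (EK : Matrix (Fin k) (Fin d) ℝ)
    (hEK : EK = (R + Bᵀ * PK * B) * K - Bᵀ * PK * A)
    (hγpos : 0 < γ)
    (hγ : γ * (opNorm R + (minEig Ψ)⁻¹ * opNorm B ^ 2 *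
      ((PK * Ψσ).trace + σ ^ 2 * R.trace)) ≤ 1)
    (hK' : K' = K - γ • EK)
    (hstab : specRad (A - B * K) < 1) (hstab' : specRad (A - B * K') < 1)
    (hPKpd : PK.PosDef) (hPK : PK = Q + Kᵀ * R * K + (A - B * K)ᵀ * PK * (A - B * K))
    (hPK'pd : PK'.PosDef)
    (hPK' : PK' = Q + K'ᵀ * R * K' + (A - B * K')ᵀ * PK' * (A - B * K')) :
    ((PK' * Ψσ).trace + σ ^ 2 * R.trace) - ((PK * Ψσ).trace + σ ^ 2 * R.trace) ≤
        -γ * minEig Ψ * (EKᵀ * EK).trace ∧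
      -γ * minEig Ψ * (EKᵀ * EK).trace ≤ 0 ∧
      (PK' * Ψσ).trace + σ ^ 2 * R.trace ≤ (PK * Ψσ).trace + σ ^ 2 * R.trace :=
  lqr_natural_gradient_monotone_general d k A B K K' σ γ Q Ψ Ψσ PK PK' R hΨσ hR hΨ EK hEK hγpos hγ
    hK' hstab' hPKpd hPK hPK'
end
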